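/- arXiv:2008.09068 — 2 statements merged into one kernel-verified Lean document; each statement's English description precedes it below -/
import Mathlib

section
/- Let 0 < μ < 1 and let f : ℝ → ℝ be continuously differentiable on [0, ∞) with |f(t)| ≤ C e^{a t} and |f′(t)| ≤ C e^{a t} for all t ≥ 0, for some constants C ≥ 0 and a ≥ 0. Then for every real s > max(a, 0), the Laplace transform of the Caputo fractional derivative satisfies ∫₀^∞ e^{−s t} (D^μ_* f)(t) dt = s^μ f̃(s) − s^{μ−1} f(0), where f̃(s) = ∫₀^∞ e^{−s t} f(t) dt. -/
open MeasureTheory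

/-- Left-sided Riemann–Liouville fractional integral of order `α`. -/
noncomputable def rlIntegral (α : ℝ) (f : ℝ → ℝ) (t : ℝ) : ℝ :=
  (1 / Real.Gamma α) * ∫ τ in (0:ℝ)..t, (t - τ) ^ (α - 1) * f τ

/-- Left-sided Caputo fractional derivative of order `μ ∈ (0,1)`, where `f'` is the
derivative of `f`: `D^μ_* f := J^(1-μ) f'`. -/
noncomputable def caputoDeriv (μ : ℝ) (f' : ℝ → ℝ) (t : ℝ) : ℝ :=
  rlIntegral (1 - μ) f' t

/-!
Since `D^μ_* f = J^(1-μ) f'`, the formula combines two rules for the Laplace transform `L`.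
Integration by parts gives `L f' = s L f - f 0`. And `e^(-st) (J^α g)(t)` is, up to `1 / Γ(α)`,
the convolution of `e^(-sτ) g(τ)` with `e^(-su) u^(α-1)` (both cut off to positive arguments);
the integral of a convolution is the product of the integrals, and the kernel integrates to
`Γ(α) s^(-α)`, so `L (J^α g) = s^(-α) L g`.
-/

open Set Filter Topology Real
open scoped Convolution

noncomputable def laplaceTransform (f : ℝ → ℝ) (s : ℝ) : ℝ :=
  ∫ t in Ioi 0, exp (-s * t) * f t

section ExponentialOrder

variable {h : ℝ → ℝ} {C a s : ℝ}

lemma norm_exp_neg_mul_mul_le {t : ℝ} (hb : |h t| ≤ C * exp (a * t)) :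
    ‖exp (-s * t) * h t‖ ≤ C * exp (-(s - a) * t) :=
  calc ‖exp (-s * t) * h t‖ = exp (-s * t) * |h t| := by
        rw [norm_mul, norm_of_nonneg (exp_pos _).le, norm_eq_abs]
    _ ≤ exp (-s * t) * (C * exp (a * t)) := by gcongr
    _ = C * exp (-(s - a) * t) := by
        rw [mul_left_comm, ← exp_add]
        ring_nf

lemma integrableOn_exp_neg_mul_mul_of_abs_le (hsa : a < s)
    (hh : AEStronglyMeasurable h (volume.restrict (Ioi 0)))
    (hb : ∀ t ≥ 0, |h t| ≤ C * exp (a * t)) :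
    IntegrableOn (fun t => exp (-s * t) * h t) (Ioi 0) := by
  refine ((exp_neg_integrableOn_Ioi 0 (sub_pos.2 hsa)).const_mul C).mono' ?_ ?_
  · exact (continuous_exp.comp (continuous_const_mul (-s))).aestronglyMeasurable.mul hh
  · filter_upwards [ae_restrict_mem measurableSet_Ioi] with t ht
    exact norm_exp_neg_mul_mul_le (hb t (le_of_lt ht))

lemma tendsto_exp_neg_mul_mul_of_abs_le (hsa : a < s)
    (hb : ∀ t ≥ 0, |h t| ≤ C * exp (a * t)) :
    Tendsto (fun t => exp (-s * t) * h t) atTop (𝓝 0) := by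
  have hdecay : Tendsto (fun t => C * exp (-(s - a) * t)) atTop (𝓝 0) := by
    simpa using (tendsto_exp_atBot.comp
      (tendsto_id.const_mul_atTop_of_neg (neg_neg_iff_pos.2 (sub_pos.2 hsa)))).const_mul C
  refine squeeze_zero_norm' ?_ hdecay
  filter_upwards [eventually_ge_atTop 0] with t ht
  exact norm_exp_neg_mul_mul_le (hb t ht)

end ExponentialOrder

theorem laplaceTransform_deriv {f f' : ℝ → ℝ} {s : ℝ}
    (hderiv : ∀ x ∈ Ici (0:ℝ), HasDerivWithinAt f (f' x) (Ici 0) x)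
    (hf : IntegrableOn (fun t => exp (-s * t) * f t) (Ioi 0))
    (hf' : IntegrableOn (fun t => exp (-s * t) * f' t) (Ioi 0))
    (hlim : Tendsto (fun t => exp (-s * t) * f t) atTop (𝓝 0)) :
    laplaceTransform f' s = s * laplaceTransform f s - f 0 := by
  have hcont : ContinuousWithinAt (fun t => exp (-s * t) * f t) (Ici 0) 0 :=
    (continuous_exp.comp (continuous_const_mul (-s))).continuousWithinAt.mul
      (hderiv 0 self_mem_Ici).continuousWithinAt
  have hderiv' : ∀ x ∈ Ioi (0:ℝ), HasDerivAt (fun t => exp (-s * t) * f t)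
      (exp (-s * x) * f' x - s * (exp (-s * x) * f x)) x := by
    intro x hx
    have hfx := (hderiv x (mem_Ioi.1 hx).le).hasDerivAt (Ici_mem_nhds hx)
    have hexp : HasDerivAt (fun t => exp (-s * t)) (exp (-s * x) * -s) x :=
      ((hasDerivAt_id' x).const_mul (-s)).exp.congr_deriv (by ring)
    exact (hexp.mul hfx).congr_deriv (by ring)
  have hparts :=
    integral_Ioi_of_hasDerivAt_of_tendsto hcont hderiv' (hf'.sub (hf.const_mul s)) hlim
  rw [integral_sub hf' (hf.const_mul s), integral_const_mul] at hparts
  simp only [mul_zero, exp_zero, one_mul, zero_sub] at hparts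
  unfold laplaceTransform
  linarith

lemma integrableOn_rpow_mul_exp_neg_mul {α s : ℝ} (hα : 0 < α) (hs : 0 < s) :
    IntegrableOn (fun u : ℝ => u ^ (α - 1) * exp (-(s * u))) (Ioi 0) :=
  Integrable.of_integral_ne_zero (by rw [integral_rpow_mul_exp_neg_mul_Ioi hα hs]; positivity)

lemma indicator_exp_neg_mul_mul_intervalIntegral_eq_convolution
    (α s : ℝ) (g : ℝ → ℝ) (t : ℝ) :
    (Ioi 0).indicator (fun t => exp (-s * t) * ∫ τ in (0:ℝ)..t, (t - τ) ^ (α - 1) * g τ) t =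
      ((Ioi 0).indicator (fun τ => exp (-s * τ) * g τ) ⋆[ContinuousLinearMap.mul ℝ ℝ]
        (Ioi 0).indicator (fun u => u ^ (α - 1) * exp (-(s * u)))) t := by
  have hprod : ∀ τ, (Ioi 0).indicator (fun τ => exp (-s * τ) * g τ) τ *
      (Ioi 0).indicator (fun u => u ^ (α - 1) * exp (-(s * u))) (t - τ) =
      (Ioo 0 t).indicator (fun τ => exp (-s * t) * ((t - τ) ^ (α - 1) * g τ)) τ := by
    intro τ
    by_cases hτ : τ ∈ Ioo 0 t
    · rw [indicator_of_mem (mem_Ioi.2 hτ.1), indicator_of_mem (mem_Ioi.2 (sub_pos.2 hτ.2)),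
        indicator_of_mem hτ, show -s * t = -s * τ + -(s * (t - τ)) by ring, exp_add]
      ring
    rw [indicator_of_notMem hτ]
    rcases not_and_or.1 hτ with hτ0 | htτ
    · rw [indicator_of_notMem (notMem_Ioi.2 (not_lt.1 hτ0)), zero_mul]
    · rw [indicator_of_notMem (fun h => htτ (sub_pos.1 (mem_Ioi.1 h))), mul_zero]
  rw [convolution_mul]
  simp_rw [hprod]
  rw [integral_indicator measurableSet_Ioo]
  by_cases ht : 0 < t
  · rw [indicator_of_mem (mem_Ioi.2 ht), intervalIntegral.integral_of_le ht.le,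
      integral_Ioc_eq_integral_Ioo, integral_const_mul]
  · rw [indicator_of_notMem (notMem_Ioi.2 (not_lt.1 ht)), Ioo_eq_empty (by simpa using ht),
      Measure.restrict_empty, integral_zero_measure]

theorem laplaceTransform_rlIntegral {α s : ℝ} {g : ℝ → ℝ} (hα : 0 < α) (hs : 0 < s)
    (hg : IntegrableOn (fun t => exp (-s * t) * g t) (Ioi 0)) :
    laplaceTransform (rlIntegral α g) s = s ^ (-α) * laplaceTransform g s := by
  have hconv := integral_convolution (ContinuousLinearMap.mul ℝ ℝ)
    ((integrable_indicator_iff measurableSet_Ioi).2 hg)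
    ((integrable_indicator_iff measurableSet_Ioi).2 (integrableOn_rpow_mul_exp_neg_mul hα hs))
  simp_rw [← indicator_exp_neg_mul_mul_intervalIntegral_eq_convolution,
    integral_indicator measurableSet_Ioi, integral_rpow_mul_exp_neg_mul_Ioi hα hs,
    ContinuousLinearMap.mul_apply'] at hconv
  calc laplaceTransform (rlIntegral α g) s
      = 1 / Gamma α *
          ∫ t in Ioi 0, exp (-s * t) * ∫ τ in (0:ℝ)..t, (t - τ) ^ (α - 1) * g τ := by
        rw [laplaceTransform, ← integral_const_mul]
        congr 1 with t
        rw [rlIntegral]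
        ring
    _ = s ^ (-α) * laplaceTransform g s := by
        rw [hconv, laplaceTransform, one_div s, inv_rpow hs.le, ← rpow_neg hs.le]
        field_simp

theorem laplace_caputo_general (μ : ℝ) (hμ1 : μ < 1) (f f' : ℝ → ℝ)
    (hderiv : ∀ x ∈ Set.Ici (0:ℝ), HasDerivWithinAt f (f' x) (Set.Ici (0:ℝ)) x)
    (hcont : ContinuousOn f' (Set.Ici (0:ℝ)))
    (C a : ℝ)
    (hfb : ∀ t ≥ (0:ℝ), |f t| ≤ C * Real.exp (a * t))
    (hf'b : ∀ t ≥ (0:ℝ), |f' t| ≤ C * Real.exp (a * t))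
    (s : ℝ) (hs : max a 0 < s) :
    (∫ t in Set.Ioi (0:ℝ), Real.exp (-s * t) * caputoDeriv μ f' t) =
      s ^ μ * (∫ t in Set.Ioi (0:ℝ), Real.exp (-s * t) * f t) - s ^ (μ - 1) * f 0 := by
  have hs0 : 0 < s := (le_max_right a 0).trans_lt hs
  have hsa : a < s := (le_max_left a 0).trans_lt hs
  have hfc : ContinuousOn f (Ici 0) := fun x hx => (hderiv x hx).continuousWithinAt
  have hf := integrableOn_exp_neg_mul_mul_of_abs_le hsa
    ((hfc.mono Ioi_subset_Ici_self).aestronglyMeasurable measurableSet_Ioi) hfb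
  have hf' := integrableOn_exp_neg_mul_mul_of_abs_le hsa
    ((hcont.mono Ioi_subset_Ici_self).aestronglyMeasurable measurableSet_Ioi) hf'b
  change laplaceTransform (rlIntegral (1 - μ) f') s =
    s ^ μ * laplaceTransform f s - s ^ (μ - 1) * f 0
  rw [laplaceTransform_rlIntegral (sub_pos.2 hμ1) hs0 hf',
    laplaceTransform_deriv hderiv hf hf' (tendsto_exp_neg_mul_mul_of_abs_le hsa hfb),
    neg_sub, mul_sub, ← mul_assoc, ← rpow_add_one hs0.ne', sub_add_cancel]

/-- Laplace transform rule for the Caputo fractional derivative of order `0 < μ < 1`: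
for `f` continuously differentiable on `[0,∞)` with `f` and `f'` of exponential order
`a ≥ 0`, and `s > max a 0`, `L{D^μ_* f}(s) = s^μ L{f}(s) - s^(μ-1) f(0)`. -/
theorem laplace_caputo (μ : ℝ) (hμ0 : 0 < μ) (hμ1 : μ < 1) (f f' : ℝ → ℝ)
    (hderiv : ∀ x ∈ Set.Ici (0:ℝ), HasDerivWithinAt f (f' x) (Set.Ici (0:ℝ)) x)
    (hcont : ContinuousOn f' (Set.Ici (0:ℝ)))
    (C a : ℝ) (hC : 0 ≤ C) (ha : 0 ≤ a)
    (hfb : ∀ t ≥ (0:ℝ), |f t| ≤ C * Real.exp (a * t))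
    (hf'b : ∀ t ≥ (0:ℝ), |f' t| ≤ C * Real.exp (a * t))
    (s : ℝ) (hs : max a 0 < s) :
    (∫ t in Set.Ioi (0:ℝ), Real.exp (-s * t) * caputoDeriv μ f' t) =
      s ^ μ * (∫ t in Set.Ioi (0:ℝ), Real.exp (-s * t) * f t) - s ^ (μ - 1) * f 0 :=
  laplace_caputo_general μ hμ1 f f' hderiv hcont C a hfb hf'b s hs
end

section
/- Let u > 0, let ω_m, ω_f, ω_v, κ_m, κ_f, κ_v, λ_mf, λ_mv, λ_fv, β_m, β_f, β_v be real numbers, and define m₁ := u^{β_m} ω_m + λ_mf + λ_mv, m₂ := λ_mf, m₃ := λ_mv, m₄ := u^{β_f} ω_f + λ_mf + λ_fv, m₅ := λ_fv, m₆ := u^{β_v} ω_v + λ_mv + λ_fv. For i = 1, 2, 3, let α_i ∈ ℝ, let (A_i, B_i, C_i) ∈ ℝ³ satisfy M(α_i)·(A_i, B_i, C_i)ᵀ = 0 where M(α) has rows (κ_m α² − m₁, m₂, m₃), (m₂, κ_f α² − m₄, m₅), (m₃, m₅, κ_v α² − m₆), let D_i ∈ ℝ, and let q_i : (0, ∞)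 → ℝ be twice differentiable with (1/r)·d/dr( r·q_i′(r) ) = α_i² q_i(r) for all r > 0. Then the functions p̄_m := Σᵢ A_i D_i q_i, p̄_f := Σᵢ B_i D_i q_i, p̄_v := Σᵢ C_i D_i q_i satisfy, for all r > 0: ω_m u^{β_m} p̄_m = κ_m (1/r) d/dr(r p̄_m′) + λ_mf (p̄_f − p̄_m) + λ_mv (p̄_v − p̄_m); ω_f u^{β_f} p̄_f = κ_f (1/r) d/dr(r p̄_f′) − λ_mf (p̄_f − p̄_m) + λ_fv (p̄_v − p̄_f); and ω_v u^{β_v} p̄_v = κ_v (1/r) d/dr(r p̄_v′) − λ_mv (p̄_v − p̄_m) − λ_fv (p̄_v − p̄_f). -/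
/-!
Each mode `qᵢ` is an eigenfunction of the radial Laplacian `f ↦ (1/r)(r f′)′` with eigenvalue
`αᵢ²`, and this operator is linear, so it acts on `Σ cᵢ qᵢ` by multiplying the `i`-th coefficient
by `αᵢ²`. The `k`-th row of `M(αᵢ)(Aᵢ, Bᵢ, Cᵢ) = 0` says that multiplying the `k`-th component
by `κ αᵢ²` equals applying the constant coupling row; summing these identities with the weights
`Dᵢ qᵢ(r)` gives the `k`-th equation of the system.
-/

open Finset

noncomputable def radialLaplacian (f : ℝ → ℝ) (r : ℝ) : ℝ :=
  1 / r * deriv (fun s => s * deriv f s) r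

theorem deriv_fun_sum_const_mul {𝕜 ι : Type*} [NontriviallyNormedField 𝕜] [Fintype ι]
    {f : ι → 𝕜 → 𝕜} {x : 𝕜} (c : ι → 𝕜) (hf : ∀ i, DifferentiableAt 𝕜 (f i) x) :
    deriv (fun y => ∑ i, c i * f i y) x = ∑ i, c i * deriv (f i) x := by
  rw [deriv_fun_sum fun i _ => (hf i).const_mul (c i)]
  exact sum_congr rfl fun i _ => deriv_const_mul _ (hf i)

theorem radialLaplacian_fun_sum_const_mul {ι : Type*} [Fintype ι] {q : ι → ℝ → ℝ} {r : ℝ}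
    (c : ι → ℝ) (hq : ∀ᶠ s in nhds r, ∀ i, DifferentiableAt ℝ (q i) s)
    (hq' : ∀ i, DifferentiableAt ℝ (deriv (q i)) r) :
    radialLaplacian (fun s => ∑ i, c i * q i s) r = ∑ i, c i * radialLaplacian (q i) r := by
  have hev : (fun s => s * deriv (fun s' => ∑ i, c i * q i s') s)
      =ᶠ[nhds r] fun s => ∑ i, c i * (s * deriv (q i) s) := by
    filter_upwards [hq] with s hs
    rw [deriv_fun_sum_const_mul c hs, mul_sum]
    exact sum_congr rfl fun i _ => mul_left_comm _ _ _
  rw [radialLaplacian, hev.deriv_eq,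
    deriv_fun_sum_const_mul c fun i => differentiableAt_fun_id.fun_mul (hq' i), mul_sum]
  exact sum_congr rfl fun i _ => mul_left_comm _ _ _

theorem radialLaplacian_fun_sum_const_mul_of_eigen {ι : Type*} [Fintype ι]
    {q : ι → ℝ → ℝ} {μ : ι → ℝ}
    (hq : ∀ i, ∀ r > (0:ℝ), DifferentiableAt ℝ (q i) r)
    (hq' : ∀ i, ∀ r > (0:ℝ), DifferentiableAt ℝ (deriv (q i)) r)
    (heig : ∀ i, ∀ r > (0:ℝ), radialLaplacian (q i) r = μ i * q i r)
    (c : ι → ℝ) {r : ℝ} (hr : 0 < r) :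
    radialLaplacian (fun s => ∑ i, c i * q i s) r = ∑ i, c i * q i r * μ i := by
  have hnear : ∀ᶠ s in nhds r, ∀ i, DifferentiableAt ℝ (q i) s := by
    filter_upwards [Ioi_mem_nhds hr] with s hs i using hq i s hs
  rw [radialLaplacian_fun_sum_const_mul c hnear fun i => hq' i r hr]
  exact sum_congr rfl fun i _ => by rw [heig i r hr]; ring

theorem sum_mul_eigenvalue_of_row_eq_zero {R ι : Type*} [CommRing R] [Fintype ι]
    {κ a b c : R} {μ x y z : ι → R}
    (h : ∀ i, (κ * μ i - a) * x i + b * y i + c * z i = 0) (w : ι → R) :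
    a * ∑ i, x i * w i - b * ∑ i, y i * w i - c * ∑ i, z i * w i
      = κ * ∑ i, x i * w i * μ i := by
  simp only [mul_sum, ← sum_sub_distrib]
  exact sum_congr rfl fun i _ => by linear_combination -w i * h i

theorem mulVec_vec3_eq_zero_iff {R : Type*} [CommRing R] {a b c d e f g h k x y z : R} :
    (!![a, b, c; d, e, f; g, h, k] : Matrix (Fin 3) (Fin 3) R).mulVec ![x, y, z] = 0 ↔
      a * x + b * y + c * z = 0 ∧ d * x + e * y + f * z = 0 ∧ g * x + h * y + k * z = 0 := by
  simp only [Matrix.cons_mulVec, Matrix.vec3_dotProduct', Matrix.empty_mulVec,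
    Matrix.cons_eq_zero_iff, Matrix.zero_empty, and_true]

theorem triple_porosity_superposition_general (u : ℝ)
    (ωm ωf ωv κm κf κv lmf lmv lfv βm βf βv : ℝ)
    (m1 m2 m3 m4 m5 m6 : ℝ)
    (hm1 : m1 = u ^ βm * ωm + lmf + lmv)
    (hm2 : m2 = lmf)
    (hm3 : m3 = lmv)
    (hm4 : m4 = u ^ βf * ωf + lmf + lfv)
    (hm5 : m5 = lfv)
    (hm6 : m6 = u ^ βv * ωv + lmv + lfv)
    (α : Fin 3 → ℝ) (A B C D : Fin 3 → ℝ) (q : Fin 3 → ℝ → ℝ)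
    (hker : ∀ i : Fin 3,
      (!![κm * (α i) ^ 2 - m1, m2, m3;
          m2, κf * (α i) ^ 2 - m4, m5;
          m3, m5, κv * (α i) ^ 2 - m6] : Matrix (Fin 3) (Fin 3) ℝ).mulVec
        ![A i, B i, C i] = 0)
    (hq1 : ∀ i : Fin 3, ∀ r > (0:ℝ), DifferentiableAt ℝ (q i) r)
    (hq2 : ∀ i : Fin 3, ∀ r > (0:ℝ), DifferentiableAt ℝ (deriv (q i)) r)
    (hq : ∀ i : Fin 3, ∀ r > (0:ℝ),
      (1 / r) * deriv (fun s => s * deriv (q i) s) r = (α i) ^ 2 * q i r) :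
    ∀ r > (0:ℝ),
      (ωm * u ^ βm * (∑ i, A i * D i * q i r) =
        κm * ((1 / r) * deriv (fun s => s * deriv (fun s' => ∑ i, A i * D i * q i s') s) r)
          + lmf * ((∑ i, B i * D i * q i r) - (∑ i, A i * D i * q i r))
          + lmv * ((∑ i, C i * D i * q i r) - (∑ i, A i * D i * q i r))) ∧
      (ωf * u ^ βf * (∑ i, B i * D i * q i r) =
        κf * ((1 / r) * deriv (fun s => s * deriv (fun s' => ∑ i, B i * D i * q i s') s) r)
          - lmf * ((∑ i, B i * D i * q i r) - (∑ i, A i * D i * q i r))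
          + lfv * ((∑ i, C i * D i * q i r) - (∑ i, B i * D i * q i r))) ∧
      (ωv * u ^ βv * (∑ i, C i * D i * q i r) =
        κv * ((1 / r) * deriv (fun s => s * deriv (fun s' => ∑ i, C i * D i * q i s') s) r)
          - lmv * ((∑ i, C i * D i * q i r) - (∑ i, A i * D i * q i r))
          - lfv * ((∑ i, C i * D i * q i r) - (∑ i, B i * D i * q i r))) := by
  intro r hr
  have lap (c : Fin 3 → ℝ) := radialLaplacian_fun_sum_const_mul_of_eigen hq1 hq2 hq c hr
  unfold radialLaplacian at lap
  simp only [mulVec_vec3_eq_zero_iff, forall_and] at hker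
  obtain ⟨rowm, rowf, rowv⟩ := hker
  have rowf' (i : Fin 3) : (κf * α i ^ 2 - m4) * B i + m2 * A i + m5 * C i = 0 := by
    linear_combination rowf i
  have rowv' (i : Fin 3) : (κv * α i ^ 2 - m6) * C i + m3 * A i + m5 * B i = 0 := by
    linear_combination rowv i
  have eqm := sum_mul_eigenvalue_of_row_eq_zero rowm fun i => D i * q i r
  have eqf := sum_mul_eigenvalue_of_row_eq_zero rowf' fun i => D i * q i r
  have eqv := sum_mul_eigenvalue_of_row_eq_zero rowv' fun i => D i * q i r
  rw [lap, lap, lap]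
  simp only [mul_assoc] at eqm eqf eqv ⊢
  subst hm1 hm2 hm3 hm4 hm5 hm6
  exact ⟨by linear_combination eqm, by linear_combination eqf, by linear_combination eqv⟩

/-- Superposition of Bessel modes solves the Laplace-transformed dimensionless
triple-porosity triple-permeability flow system with Caputo fractional orders
`βm, βf, βv`: if each `(Aᵢ, Bᵢ, Cᵢ)` lies in the kernel of `M(αᵢ)` and each `qᵢ`
satisfies `(1/r) d/dr (r qᵢ′) = αᵢ² qᵢ` on `(0,∞)`, then
`p̄m = Σ Aᵢ Dᵢ qᵢ`, `p̄f = Σ Bᵢ Dᵢ qᵢ`, `p̄v = Σ Cᵢ Dᵢ qᵢ` satisfy the three coupled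
equations. -/
theorem triple_porosity_superposition (u : ℝ) (hu : 0 < u)
    (ωm ωf ωv κm κf κv lmf lmv lfv βm βf βv : ℝ)
    (m1 m2 m3 m4 m5 m6 : ℝ)
    (hm1 : m1 = u ^ βm * ωm + lmf + lmv)
    (hm2 : m2 = lmf)
    (hm3 : m3 = lmv)
    (hm4 : m4 = u ^ βf * ωf + lmf + lfv)
    (hm5 : m5 = lfv)
    (hm6 : m6 = u ^ βv * ωv + lmv + lfv)
    (α : Fin 3 → ℝ) (A B C D : Fin 3 → ℝ) (q : Fin 3 → ℝ → ℝ)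
    (hker : ∀ i : Fin 3,
      (!![κm * (α i) ^ 2 - m1, m2, m3;
          m2, κf * (α i) ^ 2 - m4, m5;
          m3, m5, κv * (α i) ^ 2 - m6] : Matrix (Fin 3) (Fin 3) ℝ).mulVec
        ![A i, B i, C i] = 0)
    (hq1 : ∀ i : Fin 3, ∀ r > (0:ℝ), DifferentiableAt ℝ (q i) r)
    (hq2 : ∀ i : Fin 3, ∀ r > (0:ℝ), DifferentiableAt ℝ (deriv (q i)) r)
    (hq : ∀ i : Fin 3, ∀ r > (0:ℝ),
      (1 / r) * deriv (fun s => s * deriv (q i) s) r = (α i) ^ 2 * q i r) :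
    ∀ r > (0:ℝ),
      (ωm * u ^ βm * (∑ i, A i * D i * q i r) =
        κm * ((1 / r) * deriv (fun s => s * deriv (fun s' => ∑ i, A i * D i * q i s') s) r)
          + lmf * ((∑ i, B i * D i * q i r) - (∑ i, A i * D i * q i r))
          + lmv * ((∑ i, C i * D i * q i r) - (∑ i, A i * D i * q i r))) ∧
      (ωf * u ^ βf * (∑ i, B i * D i * q i r) =
        κf * ((1 / r) * deriv (fun s => s * deriv (fun s' => ∑ i, B i * D i * q i s') s) r)
          - lmf * ((∑ i, B i * D i * q i r) - (∑ i, A i * D i * q i r))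
          + lfv * ((∑ i, C i * D i * q i r) - (∑ i, B i * D i * q i r))) ∧
      (ωv * u ^ βv * (∑ i, C i * D i * q i r) =
        κv * ((1 / r) * deriv (fun s => s * deriv (fun s' => ∑ i, C i * D i * q i s') s) r)
          - lmv * ((∑ i, C i * D i * q i r) - (∑ i, A i * D i * q i r))
          - lfv * ((∑ i, C i * D i * q i r) - (∑ i, B i * D i * q i r))) :=
  triple_porosity_superposition_general u ωm ωf ωv κm κf κv lmf lmv lfv βm βf βv m1 m2 m3 m4 m5 m6
    hm1 hm2 hm3 hm4 hm5 hm6 α A B C D q hker hq1 hq2 hq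
end
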